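/- Under the same assumptions (stationary Markov chain on {0,1}^N with conditionally independent Bernoulli coordinates and affine transition probabilities p(x) = μ 1_N + (1-λ)(A x − b)), the simultaneous covariance matrix Σ⁽⁰⁾ = E[(X_0 − m)(X_0 − m)ᵀ] satisfies: its diagonal entries are Σ⁽⁰⁾_{ii} = m_i(1 − m_i), and its off-diagonal entries satisfy Σ⁽⁰⁾_{ij} = (1-λ)² [A Σ⁽⁰⁾ Aᵀ]_{ij} for i ≠ j. Equivalently, Σ⁽⁰⁾ = (1-λ)² d₀(A Σ⁽⁰⁾ Aᵀ) + diag(v), where v_i = m_i(1 − m_i) and d₀ replaces the diagonal entries by zeros. -/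
import Mathlib


open scoped BigOperators
open MeasureTheory

/-- A measurable a.e.-bounded function is integrable w.r.t. a probability measure. -/
lemma integrable_of_ae_bound {Ω : Type*} [MeasurableSpace Ω] {P : Measure Ω}
    [IsProbabilityMeasure P] {f : Ω → ℝ} (hf : Measurable f) {C : ℝ}
    (hb : ∀ᵐ ω ∂P, |f ω| ≤ C) : Integrable f P :=
  Integrable.mono' (integrable_const C) hf.aestronglyMeasurable hb

/-- The simultaneous covariance matrix `Σ⁽⁰⁾` of the stationary chain has diagonal entries
`m_i(1-m_i)` and satisfies `Σ⁽⁰⁾_{ij} = (1-λ)² [A Σ⁽⁰⁾ Aᵀ]_{ij}` off the diagonal; equivalently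
`Σ⁽⁰⁾ = (1-λ)² d₀(A Σ⁽⁰⁾ Aᵀ) + diag(v)` with `v_i = m_i(1-m_i)`. -/
theorem simultaneous_covariance_stein_equation {N : ℕ} {Ω : Type*} [MeasurableSpace Ω]
    (P : Measure Ω) [IsProbabilityMeasure P]
    (Xm1 X0 : Ω → Fin N → ℝ) (hXm1 : Measurable Xm1) (hX0 : Measurable X0)
    (hXm1bin : ∀ᵐ ω ∂P, ∀ i, Xm1 ω i = 0 ∨ Xm1 ω i = 1)
    (hX0bin : ∀ᵐ ω ∂P, ∀ i, X0 ω i = 0 ∨ X0 ω i = 1)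
    (mu lam : ℝ) (A : Matrix (Fin N) (Fin N) ℝ) (b : Fin N → ℝ)
    (pvec : (Fin N → ℝ) → Fin N → ℝ)
    (hp : ∀ x, pvec x = mu • (fun _ => (1 : ℝ)) + (1 - lam) • (A.mulVec x - b))
    -- conditionally on `X_{-1}`, the coordinates of `X0` are independent Bernoulli
    -- with parameters `pvec (Xm1 ω) i`
    (hcond : ∀ i, P[(fun ω => X0 ω i) | MeasurableSpace.comap Xm1 inferInstance]
      =ᵐ[P] fun ω => pvec (Xm1 ω) i)
    (hcondindep : ∀ i j, i ≠ j →
      P[(fun ω => X0 ω i * X0 ω j) | MeasurableSpace.comap Xm1 inferInstance]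
        =ᵐ[P] fun ω => pvec (Xm1 ω) i * pvec (Xm1 ω) j)
    (m : Fin N → ℝ)
    -- stationarity: `X_{-1}` and `X0` have the same mean vector and covariance matrix
    (hmm1 : ∀ i, m i = ∫ ω, Xm1 ω i ∂P) (hm0 : ∀ i, m i = ∫ ω, X0 ω i ∂P)
    (Sigma0 : Matrix (Fin N) (Fin N) ℝ)
    (hS0 : ∀ i j, Sigma0 i j = ∫ ω, (X0 ω i - m i) * (X0 ω j - m j) ∂P)
    (hS0m1 : ∀ i j, Sigma0 i j = ∫ ω, (Xm1 ω i - m i) * (Xm1 ω j - m j) ∂P) :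
    ((∀ i, Sigma0 i i = m i * (1 - m i)) ∧
      (∀ i j, i ≠ j → Sigma0 i j = (1 - lam) ^ 2 * (A * Sigma0 * A.transpose) i j)) ∧
    Sigma0 = (1 - lam) ^ 2 •
        Matrix.of (fun i j => if i = j then 0 else (A * Sigma0 * A.transpose) i j) +
      Matrix.diagonal (fun i => m i * (1 - m i)) := by
  classical
  have hle : MeasurableSpace.comap Xm1 inferInstance ≤ ‹MeasurableSpace Ω› :=
    hXm1.comap_le
  haveI : SigmaFinite (P.trim hle) := inferInstance
  -- measurability of coordinates
  have hX0i : ∀ i, Measurable fun ω => X0 ω i := fun i => (measurable_pi_apply i).comp hX0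
  have hXm1i : ∀ i, Measurable fun ω => Xm1 ω i := fun i => (measurable_pi_apply i).comp hXm1
  -- integrability of X0 coordinates
  have hintX0 : ∀ i, Integrable (fun ω => X0 ω i) P := by
    intro i
    refine integrable_of_ae_bound (hX0i i) (C := 1) ?_
    filter_upwards [hX0bin] with ω hω
    rcases hω i with h | h <;> simp [h]
  -- diagonal entries
  have hdiag : ∀ i, Sigma0 i i = m i * (1 - m i) := by
    intro i
    have hcongr : (fun ω => (X0 ω i - m i) * (X0 ω i - m i))
        =ᵐ[P] fun ω => (1 - 2 * m i) * X0 ω i + m i * m i := by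
      filter_upwards [hX0bin] with ω hω
      rcases hω i with h | h <;> simp [h] <;> ring
    rw [hS0 i i, integral_congr_ae hcongr, integral_add ((hintX0 i).const_mul _)
      (integrable_const _), integral_const_mul, integral_const]
    simp [← hm0 i]
    ring
  -- the conditional mean function
  set q : Ω → Fin N → ℝ := fun ω i => pvec (Xm1 ω) i with hq
  have hqval : ∀ ω i, q ω i = mu + (1 - lam) * (∑ k, A i k * Xm1 ω k - b i) := by
    intro ω i
    simp [hq, hp (Xm1 ω), Matrix.mulVec, dotProduct]
  -- integrability of Xm1 coordinates and related products
  have hintXm1 : ∀ i, Integrable (fun ω => Xm1 ω i) P := by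
    intro i
    refine integrable_of_ae_bound (hXm1i i) (C := 1) ?_
    filter_upwards [hXm1bin] with ω hω
    rcases hω i with h | h <;> simp [h]
  have hintYkl : ∀ k l, Integrable (fun ω => (Xm1 ω k - m k) * (Xm1 ω l - m l)) P := by
    intro k l
    refine integrable_of_ae_bound (((hXm1i k).sub measurable_const).mul
      ((hXm1i l).sub measurable_const)) (C := (1 + |m k|) * (1 + |m l|)) ?_
    filter_upwards [hXm1bin] with ω hω
    rw [abs_mul]
    have h1 : |Xm1 ω k - m k| ≤ 1 + |m k| := by
      rcases hω k with h | h <;> rw [h] <;>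
        simpa using (abs_sub _ _).trans (by simp)
    have h2 : |Xm1 ω l - m l| ≤ 1 + |m l| := by
      rcases hω l with h | h <;> rw [h] <;>
        simpa using (abs_sub _ _).trans (by simp)
    exact mul_le_mul h1 h2 (abs_nonneg _) (by positivity)
  -- mean of q equals m
  have hmq : ∀ i, m i = ∫ ω, q ω i ∂P := by
    intro i
    rw [hm0 i, ← integral_condExp hle, integral_congr_ae (hcond i)]
  -- centered q
  have hqc : ∀ ω i, q ω i - m i = (1 - lam) * ∑ k, A i k * (Xm1 ω k - m k) := by
    intro ω i
    have : m i = mu + (1 - lam) * (∑ k, A i k * m k - b i) := by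
      rw [hmq i]
      have : (fun ω => q ω i) = fun ω =>
          mu + (1 - lam) * (∑ k, A i k * Xm1 ω k - b i) := by
        funext ω; exact hqval ω i
      rw [this]
      rw [integral_add (integrable_const _), integral_const_mul, integral_sub, integral_const,
        integral_finset_sum]
      · simp only [integral_const_mul]
        simp [← hmm1]
      · exact fun k _ => (hintXm1 k).const_mul _
      · exact integrable_finset_sum _ fun k _ => (hintXm1 k).const_mul _
      · exact integrable_const _
      · refine (Integrable.sub (integrable_finset_sum _ fun k _ => (hintXm1 k).const_mul _)
          (integrable_const _)).const_mul _
    have expand : (1 - lam) * ∑ k, A i k * (Xm1 ω k - m k)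
        = (1 - lam) * (∑ k, A i k * Xm1 ω k) - (1 - lam) * (∑ k, A i k * m k) := by
      rw [Finset.mul_sum, Finset.mul_sum, Finset.mul_sum, ← Finset.sum_sub_distrib]
      exact Finset.sum_congr rfl fun k _ => by ring
    rw [hqval ω i, this, expand]
    ring
  -- integrability of q coordinates
  have hintq : ∀ i, Integrable (fun ω => q ω i) P := by
    intro i
    have : (fun ω => q ω i) = fun ω => mu + (1 - lam) * (∑ k, A i k * Xm1 ω k - b i) :=
      funext fun ω => hqval ω i
    rw [this]
    exact (integrable_const _).add
      (((integrable_finset_sum _ fun k _ => (hintXm1 k).const_mul _).sub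
        (integrable_const _)).const_mul _)
  -- integrability of X0 products
  have hintX0X0 : ∀ i j, Integrable (fun ω => X0 ω i * X0 ω j) P := by
    intro i j
    refine integrable_of_ae_bound ((hX0i i).mul (hX0i j)) (C := 1) ?_
    filter_upwards [hX0bin] with ω hω
    rcases hω i with h | h <;> rcases hω j with h' | h' <;> simp [h, h']
  -- pointwise expansion of centered q products
  have hpoint : ∀ i j ω, (q ω i - m i) * (q ω j - m j)
      = (1 - lam) ^ 2 * ∑ k, ∑ l, A i k * A j l * ((Xm1 ω k - m k) * (Xm1 ω l - m l)) := by
    intro i j ω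
    rw [hqc ω i, hqc ω j]
    have : ((1 - lam) * ∑ k, A i k * (Xm1 ω k - m k)) *
        ((1 - lam) * ∑ l, A j l * (Xm1 ω l - m l))
        = (1 - lam) ^ 2 * ((∑ k, A i k * (Xm1 ω k - m k)) *
          (∑ l, A j l * (Xm1 ω l - m l))) := by ring
    rw [this, Finset.sum_mul_sum]
    congr 1
    exact Finset.sum_congr rfl fun k _ => Finset.sum_congr rfl fun l _ => by ring
  have hintqc2 : ∀ i j, Integrable (fun ω => (q ω i - m i) * (q ω j - m j)) P := by
    intro i j
    have : (fun ω => (q ω i - m i) * (q ω j - m j)) = fun ω =>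
        (1 - lam) ^ 2 * ∑ k, ∑ l, A i k * A j l * ((Xm1 ω k - m k) * (Xm1 ω l - m l)) :=
      funext fun ω => hpoint i j ω
    rw [this]
    exact (integrable_finset_sum _ fun k _ => integrable_finset_sum _ fun l _ =>
      (hintYkl k l).const_mul _).const_mul _
  -- value of the integral of centered q products
  have hintqc2val : ∀ i j, ∫ ω, (q ω i - m i) * (q ω j - m j) ∂P
      = (1 - lam) ^ 2 * ∑ k, ∑ l, A i k * A j l * Sigma0 k l := by
    intro i j
    have : (fun ω => (q ω i - m i) * (q ω j - m j)) = fun ω =>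
        (1 - lam) ^ 2 * ∑ k, ∑ l, A i k * A j l * ((Xm1 ω k - m k) * (Xm1 ω l - m l)) :=
      funext fun ω => hpoint i j ω
    rw [this, integral_const_mul, integral_finset_sum _
      (fun k _ => integrable_finset_sum _ fun l _ => (hintYkl k l).const_mul _)]
    congr 1
    refine Finset.sum_congr rfl fun k _ => ?_
    rw [integral_finset_sum _ fun l _ => (hintYkl k l).const_mul _]
    exact Finset.sum_congr rfl fun l _ => by rw [integral_const_mul, ← hS0m1]
  -- matrix entry identity
  have hmat : ∀ i j, (A * Sigma0 * A.transpose) i j = ∑ k, ∑ l, A i k * A j l * Sigma0 k l := by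
    intro i j
    rw [Matrix.mul_apply]
    rw [Finset.sum_comm]
    refine Finset.sum_congr rfl fun k _ => ?_
    rw [Matrix.mul_apply, Finset.sum_mul]
    exact Finset.sum_congr rfl fun l _ => by
      simp [Matrix.transpose_apply, Matrix.mul_apply]
      ring
  -- off-diagonal entries
  have hoff : ∀ i j, i ≠ j → Sigma0 i j = (1 - lam) ^ 2 * (A * Sigma0 * A.transpose) i j := by
    intro i j hij
    have h1 : Sigma0 i j = (∫ ω, X0 ω i * X0 ω j ∂P) - m i * m j := by
      rw [hS0 i j]
      have : (fun ω => (X0 ω i - m i) * (X0 ω j - m j)) = fun ω =>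
          X0 ω i * X0 ω j - m j * X0 ω i - m i * X0 ω j + m i * m j :=
        funext fun ω => by ring
      have I1 : Integrable (fun ω => X0 ω i * X0 ω j - m j * X0 ω i) P :=
        (hintX0X0 i j).sub ((hintX0 i).const_mul _)
      have I2 : Integrable (fun ω => X0 ω i * X0 ω j - m j * X0 ω i - m i * X0 ω j) P :=
        I1.sub ((hintX0 j).const_mul _)
      rw [this, integral_add I2 (integrable_const _),
        integral_sub I1 ((hintX0 j).const_mul _),
        integral_sub (hintX0X0 i j) ((hintX0 i).const_mul _),
        integral_const_mul, integral_const_mul, integral_const]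
      simp [← hm0]
      ring
    have h2 : (∫ ω, X0 ω i * X0 ω j ∂P) = ∫ ω, q ω i * q ω j ∂P := by
      rw [← integral_condExp hle, integral_congr_ae (hcondindep i j hij)]
    have h3 : (∫ ω, q ω i * q ω j ∂P) = (∫ ω, (q ω i - m i) * (q ω j - m j) ∂P) + m i * m j := by
      have : (fun ω => q ω i * q ω j) = fun ω =>
          (q ω i - m i) * (q ω j - m j) + m j * q ω i + m i * q ω j - m i * m j :=
        funext fun ω => by ring
      have J1 : Integrable (fun ω => (q ω i - m i) * (q ω j - m j) + m j * q ω i) P :=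
        (hintqc2 i j).add ((hintq i).const_mul _)
      have J2 : Integrable
          (fun ω => (q ω i - m i) * (q ω j - m j) + m j * q ω i + m i * q ω j) P :=
        J1.add ((hintq j).const_mul _)
      rw [this, integral_sub J2 (integrable_const _),
        integral_add J1 ((hintq j).const_mul _),
        integral_add (hintqc2 i j) ((hintq i).const_mul _),
        integral_const_mul, integral_const_mul, integral_const]
      simp [← hmq]
      ring
    rw [h1, h2, h3, hintqc2val, hmat]
    ring
  refine ⟨⟨hdiag, hoff⟩, ?_⟩
  ext i j
  by_cases hij : i = j
  · subst hij
    simp [Matrix.diagonal, hdiag i]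
  · simp [Matrix.diagonal, hij, hoff i j hij]
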